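/- arXiv:0804.2985 — 5 statements merged into one kernel-verified Lean document; each statement's English description precedes it below -/
import Mathlib

section
/- Let b_1 ≥ ... ≥ b_n be integers and c_2 an integer with c_2 > Σ_{i<j} b_i b_j. Then the set of integers t for which c_2 + (n-1)·t·(Σ b_i) + C(n,2)·t² ≤ 0 has cardinality at most b_1 - b_n - 1 (in particular it is empty if b_1 ≤ b_n + 1). -/
lemma two_mul_pairsum (n : ℕ) (x : Fin n → ℤ) :
    2 * ∑ i : Fin n, ∑ j : Fin n, (if i < j then x i * x j else 0) =
      (∑ i, x i) ^ 2 - ∑ i, (x i) ^ 2 := by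
  have hsq : (∑ i, x i) ^ 2 = ∑ i : Fin n, ∑ j : Fin n, x i * x j := by
    rw [sq, Finset.sum_mul_sum]
  have hsplit : ∀ i j : Fin n, x i * x j =
      (if i < j then x i * x j else 0) + (if j < i then x i * x j else 0) +
      (if i = j then x i * x j else 0) := by
    intro i j
    rcases lt_trichotomy i j with h | h | h
    · simp [h, h.ne, not_lt_of_gt h]
    · simp [h]
    · simp [h, h.ne', not_lt_of_gt h]
  have h2 : ∑ i : Fin n, ∑ j : Fin n, x i * x j =
      (∑ i : Fin n, ∑ j : Fin n, (if i < j then x i * x j else 0)) +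
      (∑ i : Fin n, ∑ j : Fin n, (if j < i then x i * x j else 0)) +
      (∑ i : Fin n, ∑ j : Fin n, (if i = j then x i * x j else 0)) := by
    rw [← Finset.sum_add_distrib, ← Finset.sum_add_distrib]
    apply Finset.sum_congr rfl; intro i _
    rw [← Finset.sum_add_distrib, ← Finset.sum_add_distrib]
    exact Finset.sum_congr rfl fun j _ => hsplit i j
  have h3 : (∑ i : Fin n, ∑ j : Fin n, (if j < i then x i * x j else 0)) =
      (∑ i : Fin n, ∑ j : Fin n, (if i < j then x i * x j else 0)) := by
    rw [Finset.sum_comm]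
    apply Finset.sum_congr rfl; intro i _
    apply Finset.sum_congr rfl; intro j _
    rw [mul_comm]
  have h4 : (∑ i : Fin n, ∑ j : Fin n, (if i = j then x i * x j else 0)) =
      ∑ i : Fin n, (x i) ^ 2 := by
    apply Finset.sum_congr rfl; intro i _
    simp [Finset.sum_ite_eq, sq]
  rw [hsq, h2, h3, h4]; ring

theorem stmt_2 (n : ℕ) (hn : 0 < n) (b : Fin n → ℤ) (hb : Antitone b) (c₂ : ℤ)
    (hc : c₂ > ∑ i : Fin n, ∑ j : Fin n, if i < j then b i * b j else 0) :
    Set.ncard {t : ℤ |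
        c₂ + (n - 1 : ℤ) * t * (∑ i : Fin n, b i) + (n.choose 2 : ℤ) * t ^ 2 ≤ 0} ≤
      (b ⟨0, hn⟩ - b ⟨n - 1, Nat.sub_lt hn one_pos⟩ - 1).toNat := by
  set B0 := b ⟨0, hn⟩ with hB0
  set Bl := b ⟨n - 1, Nat.sub_lt hn one_pos⟩ with hBl
  have hchoose : (2 : ℤ) * (n.choose 2 : ℤ) = (n : ℤ) * ((n : ℤ) - 1) := by
    rcases n with _ | m
    · simp
    · have hd : 2 ∣ (m + 1) * m := by
        rw [mul_comm]; exact (Nat.even_mul_succ_self m).two_dvd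
      have h : 2 * ((m + 1).choose 2) = (m + 1) * m := by
        rw [Nat.choose_two_right]
        simp only [Nat.add_sub_cancel]
        exact Nat.mul_div_cancel' hd
      have := congrArg (Nat.cast (R := ℤ)) h
      push_cast at this ⊢
      linarith
  have hsub : {t : ℤ |
        c₂ + (n - 1 : ℤ) * t * (∑ i : Fin n, b i) + (n.choose 2 : ℤ) * t ^ 2 ≤ 0} ⊆
      Set.Ioo (-B0) (-Bl) := by
    intro t ht
    simp only [Set.mem_setOf_eq] at ht
    have key1 := two_mul_pairsum n b
    have key2 := two_mul_pairsum n (fun i => b i + t)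
    have hsum1 : (∑ i : Fin n, (b i + t)) = (∑ i, b i) + n * t := by
      rw [Finset.sum_add_distrib]
      simp [mul_comm]
    have hsum2 : (∑ i : Fin n, (b i + t) ^ 2) =
        (∑ i, (b i) ^ 2) + 2 * t * (∑ i, b i) + n * t ^ 2 := by
      have : ∀ i : Fin n, (b i + t) ^ 2 = (b i) ^ 2 + 2 * t * b i + t ^ 2 := fun i => by ring
      rw [Finset.sum_congr rfl fun i _ => this i, Finset.sum_add_distrib,
        Finset.sum_add_distrib, ← Finset.mul_sum]
      simp [mul_comm]
    rw [hsum1, hsum2] at key2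
    -- the sum of shifted products is negative
    have hneg : (∑ i : Fin n, ∑ j : Fin n, (if i < j then (b i + t) * (b j + t) else 0)) < 0 := by
      nlinarith [key1, key2, ht, hc]
    -- hence some pair product is negative
    have hex : ∃ i j : Fin n, i < j ∧ (b i + t) * (b j + t) < 0 := by
      by_contra h
      push_neg at h
      refine absurd hneg (not_lt.mpr (Finset.sum_nonneg fun i _ => Finset.sum_nonneg fun j _ => ?_))
      by_cases hij : i < j
      · simp only [hij, if_true]; exact h i j hij
      · simp [hij]
    obtain ⟨i, j, hij, hprod⟩ := hex
    have hbij : b j ≤ b i := hb hij.le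
    have hj : b j + t < 0 := by nlinarith
    have hi : 0 < b i + t := by nlinarith
    have hi0 : b i ≤ B0 := hb (by simp [Fin.le_def])
    have hjl : Bl ≤ b j := hb (by simp [Fin.le_def]; omega)
    constructor <;> [linarith; linarith]
  calc Set.ncard {t : ℤ |
        c₂ + (n - 1 : ℤ) * t * (∑ i : Fin n, b i) + (n.choose 2 : ℤ) * t ^ 2 ≤ 0}
      ≤ (Set.Ioo (-B0) (-Bl)).ncard := Set.ncard_le_ncard hsub (Set.finite_Ioo _ _)
    _ = (B0 - Bl - 1).toNat := by
        rw [← Finset.coe_Ioo, Set.ncard_coe_finset, Int.card_Ioo]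
        congr 1; ring
end

section
/- Let b_1 ≥ b_2 ≥ ... ≥ b_n be integers with no gap, i.e. b_i - b_{i+1} ≤ 1 for all i = 1,...,n-1. Then 12·(n·Σ_{i=1}^n b_i² - (Σ_{i=1}^n b_i)²) ≤ n²(n²-1). -/
/-- Sum of squared pairwise differences identity. -/
lemma sumsq_pairs {n : ℕ} (x : Fin n → ℤ) :
    ∑ i : Fin n, ∑ j : Fin n, (x i - x j) ^ 2 =
      2 * ((n : ℤ) * (∑ i : Fin n, x i ^ 2) - (∑ i : Fin n, x i) ^ 2) := by
  have h : ∀ i j : Fin n, (x i - x j) ^ 2 = x i ^ 2 + x j ^ 2 - 2 * (x i * x j) := by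
    intro i j; ring
  simp_rw [h, Finset.sum_sub_distrib, Finset.sum_add_distrib, Finset.sum_const,
    Finset.card_univ, Fintype.card_fin, ← Finset.mul_sum, ← Finset.sum_mul,
    nsmul_eq_mul, mul_comm]
  rw [← Finset.mul_sum]
  ring

lemma sum_range_sq_int (n : ℕ) :
    6 * ∑ i ∈ Finset.range n, (i : ℤ) ^ 2 = n * (n - 1) * (2 * n - 1) := by
  induction n with
  | zero => simp
  | succ m ih =>
    rw [Finset.sum_range_succ, mul_add, ih]
    push_cast
    ring

lemma sum_range_id_int (n : ℕ) :
    2 * ∑ i ∈ Finset.range n, (i : ℤ) = n * (n - 1) := by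
  induction n with
  | zero => simp
  | succ m ih =>
    rw [Finset.sum_range_succ, mul_add, ih]
    push_cast
    ring

theorem stmt_3 (n : ℕ) (hn : 0 < n) (b : Fin n → ℤ) (hb : Antitone b)
    (hgap : ∀ i : Fin n, ∀ j : Fin n, (j : ℕ) = (i : ℕ) + 1 → b i - b j ≤ 1) :
    12 * ((n : ℤ) * (∑ i : Fin n, (b i) ^ 2) - (∑ i : Fin n, b i) ^ 2) ≤
      (n : ℤ) ^ 2 * ((n : ℤ) ^ 2 - 1) := by
  -- gap lemma
  have key : ∀ k : ℕ, ∀ i j : Fin n, (j : ℕ) = (i : ℕ) + k → b i - b j ≤ (k : ℤ) := by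
    intro k
    induction k with
    | zero =>
      intro i j hij
      have : i = j := Fin.ext (by omega)
      simp [this]
    | succ m ih =>
      intro i j hij
      have hm : (i : ℕ) + m < n := by have := j.isLt; omega
      set m' : Fin n := ⟨(i : ℕ) + m, hm⟩ with hm'
      have h1 : b i - b m' ≤ (m : ℤ) := ih i m' rfl
      have h2 : b m' - b j ≤ 1 := hgap m' j (by simp [hm']; omega)
      push_cast
      linarith
  -- squared difference bound
  have sq_bd : ∀ i j : Fin n, (b i - b j) ^ 2 ≤ ((i : ℤ) - (j : ℤ)) ^ 2 := by
    have main : ∀ i j : Fin n, (i : ℕ) ≤ (j : ℕ) →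
        (b i - b j) ^ 2 ≤ ((i : ℤ) - (j : ℤ)) ^ 2 := by
      intro i j hij
      have hle : i ≤ j := hij
      have h0 : 0 ≤ b i - b j := by
        have := hb hle; linarith
      have h1 : b i - b j ≤ ((j : ℤ) - (i : ℤ)) := by
        have := key ((j : ℕ) - (i : ℕ)) i j (by omega)
        have : b i - b j ≤ (((j : ℕ) - (i : ℕ) : ℕ) : ℤ) := this
        push_cast [hij] at this
        linarith
      have : (b i - b j) ^ 2 ≤ ((j : ℤ) - (i : ℤ)) ^ 2 :=
        sq_le_sq' (by linarith) h1
      calc (b i - b j) ^ 2 ≤ ((j : ℤ) - (i : ℤ)) ^ 2 := this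
        _ = ((i : ℤ) - (j : ℤ)) ^ 2 := by ring
    intro i j
    rcases le_total (i : ℕ) (j : ℕ) with h | h
    · exact main i j h
    · have := main j i h
      calc (b i - b j) ^ 2 = (b j - b i) ^ 2 := by ring
        _ ≤ ((j : ℤ) - (i : ℤ)) ^ 2 := this
        _ = ((i : ℤ) - (j : ℤ)) ^ 2 := by ring
  -- sum comparison
  have hsum : ∑ i : Fin n, ∑ j : Fin n, (b i - b j) ^ 2 ≤
      ∑ i : Fin n, ∑ j : Fin n, ((i : ℤ) - (j : ℤ)) ^ 2 :=
    Finset.sum_le_sum fun i _ => Finset.sum_le_sum fun j _ => sq_bd i j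
  have hb2 := sumsq_pairs b
  have hi2 := sumsq_pairs (fun i : Fin n => (i : ℤ))
  -- compute the index sums
  have hSi : 2 * ∑ i : Fin n, (i : ℤ) = n * (n - 1) := by
    rw [Fin.sum_univ_eq_sum_range (fun i => (i : ℤ))]
    exact sum_range_id_int n
  have hSi2 : 6 * ∑ i : Fin n, (i : ℤ) ^ 2 = n * (n - 1) * (2 * n - 1) := by
    rw [Fin.sum_univ_eq_sum_range (fun i => (i : ℤ) ^ 2)]
    exact sum_range_sq_int n
  -- final computation
  have hrhs : 6 * ∑ i : Fin n, ∑ j : Fin n, ((i : ℤ) - (j : ℤ)) ^ 2 =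
      (n : ℤ) ^ 2 * ((n : ℤ) ^ 2 - 1) := by
    rw [hi2]
    have expand : 6 * (2 * ((n : ℤ) * (∑ i : Fin n, (i : ℤ) ^ 2) - (∑ i : Fin n, (i : ℤ)) ^ 2))
        = 2 * (n : ℤ) * (6 * ∑ i : Fin n, (i : ℤ) ^ 2)
          - 3 * (2 * ∑ i : Fin n, (i : ℤ)) ^ 2 := by ring
    rw [expand, hSi, hSi2]
    ring
  linarith [hsum]
end

section
/- Let n be even, let b_1 ≥ ... ≥ b_n be integers with no gap (b_i - b_{i+1} ≤ 1), and suppose Σ b_i = c̄ where 0 ≤ c̄ ≤ n/2. Then 4·Σ_{1≤i<j≤n} b_i b_j ≥ -C(n,3), where C(n,3) is the binomial coefficient. -/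
open Finset


lemma sum_id' (n : ℕ) : 2 * ∑ i ∈ range n, (i:ℤ) = (n:ℤ) * ((n:ℤ) - 1) := by
  induction n with
  | zero => simp
  | succ m ih =>
    rw [Finset.sum_range_succ]
    push_cast
    push_cast at ih
    linarith [ih]

lemma sum_sq' (n : ℕ) : 6 * ∑ i ∈ range n, (i:ℤ)^2 = (n:ℤ) * ((n:ℤ) - 1) * (2*(n:ℤ) - 1) := by
  induction n with
  | zero => simp
  | succ m ih =>
    rw [Finset.sum_range_succ]
    push_cast
    push_cast at ih
    linarith [ih]

lemma pairs_sq (n : ℕ) :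
    12 * ∑ j ∈ range n, ∑ i ∈ range j, ((j:ℤ) - (i:ℤ))^2
      = (n:ℤ)^2 * ((n:ℤ)^2 - 1) := by
  induction n with
  | zero => simp
  | succ m ih =>
    rw [Finset.sum_range_succ]
    have e : ∑ i ∈ range m, ((m:ℤ) - (i:ℤ))^2
        = (∑ i ∈ range m, (i:ℤ)^2) - (m:ℤ)*(2 * ∑ i ∈ range m, (i:ℤ)) + (m:ℤ)*(m:ℤ)^2 := by
      have h : ∀ i ∈ range m, ((m:ℤ) - (i:ℤ))^2 = (i:ℤ)^2 - 2*(m:ℤ)*(i:ℤ) + (m:ℤ)^2 := by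
        intro i _; ring
      rw [Finset.sum_congr rfl h, Finset.sum_add_distrib, Finset.sum_sub_distrib,
        ← Finset.mul_sum, Finset.sum_const, card_range, nsmul_eq_mul]
      ring
    rw [e]
    have h1 := sum_id' m
    have h2 := sum_sq' m
    push_cast
    push_cast at ih h1 h2
    linear_combination ih + 2*h2 - 12*(m:ℤ)*h1

lemma filter_lt_range (n j : ℕ) (h : j ≤ n) :
    (range n).filter (fun i => i < j) = range j := by
  ext x
  simp only [Finset.mem_filter, Finset.mem_range]
  omega

lemma filter_le_range (n M : ℕ) :
    (range n).filter (fun i => M ≤ i) = Finset.Ico M n := by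
  ext x
  simp only [Finset.mem_filter, Finset.mem_range, Finset.mem_Ico]
  omega

lemma countlem (n P M : ℕ) (v : ℤ) (hPM : P ≤ M) (hMn : M ≤ n) :
    ∑ j ∈ range n, ∑ i ∈ range j, (if i < P ∧ M ≤ j then v else 0)
      = (P:ℤ) * ((n:ℤ) - M) * v := by
  have hrow : ∀ j ∈ range n, (∑ i ∈ range j, if i < P ∧ M ≤ j then v else 0)
      = if M ≤ j then (P:ℤ) * v else 0 := by
    intro j _
    by_cases hMj : M ≤ j
    · simp only [hMj, and_true, if_true]
      rw [← Finset.sum_filter, filter_lt_range j P (le_trans hPM hMj),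
        Finset.sum_const, card_range, nsmul_eq_mul]
    · simp [hMj]
  rw [Finset.sum_congr rfl hrow, ← Finset.sum_filter, filter_le_range n M,
    Finset.sum_const, Nat.card_Ico, nsmul_eq_mul]
  have hcast : ((n - M : ℕ) : ℤ) = (n:ℤ) - M := by omega
  rw [hcast]
  ring

lemma count2 (n K : ℕ) (hK : K ≤ n) :
    ∑ j ∈ range n, ∑ i ∈ range j, (if i < K ∧ K ≤ j then 2*((j:ℤ) - (i:ℤ)) else 0)
      = (n:ℤ) * (K:ℤ) * ((n:ℤ) - K) := by
  have hrow : ∀ j ∈ range n, (∑ i ∈ range j, if i < K ∧ K ≤ j then 2*((j:ℤ) - (i:ℤ)) else 0)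
      = if K ≤ j then 2*(K:ℤ)*(j:ℤ) - (K:ℤ)*((K:ℤ)-1) else 0 := by
    intro j _
    by_cases hKj : K ≤ j
    · simp only [hKj, and_true, if_true]
      rw [← Finset.sum_filter, filter_lt_range j K hKj]
      have h : ∀ i ∈ range K, 2*((j:ℤ) - (i:ℤ)) = 2*(j:ℤ) - 2*(i:ℤ) := by
        intro i _; ring
      rw [Finset.sum_congr rfl h, Finset.sum_sub_distrib, Finset.sum_const, card_range,
        nsmul_eq_mul, ← Finset.mul_sum]
      have h2 := sum_id' K
      linarith [h2]
    · simp [hKj]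
  rw [Finset.sum_congr rfl hrow, ← Finset.sum_filter, filter_le_range n K]
  rw [Finset.sum_sub_distrib, Finset.sum_const, Nat.card_Ico, nsmul_eq_mul]
  rw [← Finset.mul_sum, Finset.sum_Ico_eq_sub _ hK]
  have h1 := sum_id' n
  have h2 := sum_id' K
  have hcast : ((n - K : ℕ) : ℤ) = (n:ℤ) - K := by omega
  rw [hcast]
  linear_combination (K:ℤ) * h1 - (K:ℤ) * h2

lemma countsingle (n K : ℕ) (v : ℤ) (hK : K < n) :
    ∑ i ∈ range n, (if i < K ∧ K ≤ n - 1 then v else 0) = (K:ℤ) * v := by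
  have hcond : ∀ i, (i < K ∧ K ≤ n - 1) ↔ (i < K) := by intro i; omega
  have h : ∀ i ∈ range n, (if i < K ∧ K ≤ n - 1 then v else 0) = (if i < K then v else 0) := by
    intro i _
    simp only [hcond]
  rw [Finset.sum_congr rfl h, ← Finset.sum_filter, filter_lt_range n K (by omega),
    Finset.sum_const, card_range, nsmul_eq_mul]

-- triangular reshaping
lemma tri_reshape (n : ℕ) (F : ℕ → ℕ → ℤ) :
    ∑ i ∈ range n, ∑ j ∈ range n, (if i < j then F i j else 0)
      = ∑ j ∈ range n, ∑ i ∈ range j, F i j := by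
  rw [Finset.sum_comm]
  apply Finset.sum_congr rfl
  intro j hj
  rw [← Finset.sum_filter, filter_lt_range n j (le_of_lt (Finset.mem_range.mp hj))]

lemma swap_in (n : ℕ) (F : ℕ → ℕ → ℕ → ℤ) :
    ∑ j ∈ range n, ∑ i ∈ range j, ∑ K ∈ range n, F j i K
      = ∑ K ∈ range n, ∑ j ∈ range n, ∑ i ∈ range j, F j i K := by
  have h : ∀ j ∈ range n, ∑ i ∈ range j, ∑ K ∈ range n, F j i K
      = ∑ K ∈ range n, ∑ i ∈ range j, F j i K := fun j _ => Finset.sum_comm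
  rw [Finset.sum_congr rfl h]
  exact Finset.sum_comm

lemma sq_sum_split (n : ℕ) (a : ℕ → ℤ) :
    (∑ i ∈ range n, a i)^2
      = (∑ i ∈ range n, (a i)^2) + 2 * ∑ j ∈ range n, ∑ i ∈ range j, a i * a j := by
  induction n with
  | zero => simp
  | succ m ih =>
    rw [Finset.sum_range_succ, Finset.sum_range_succ, Finset.sum_range_succ]
    have h : ∀ i ∈ range m, a i * a m = a i * a m := fun _ _ => rfl
    have e : ∑ i ∈ range m, a i * a m = (∑ i ∈ range m, a i) * a m := by
      rw [Finset.sum_mul]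
    rw [e]
    linarith [ih, sq_nonneg ((∑ i ∈ range m, a i) + a m)]


lemma setlem (n : ℕ) (hn : 1 ≤ n) (S : Finset ℕ) (hS : ∀ k ∈ S, 1 ≤ k ∧ k ≤ n - 1)
    (r q : ℕ) (hsum : (∑ k ∈ S, k) = r + q * n) (hr : r < n) :
    ((n:ℤ) - 1) * ((r:ℤ) * ((n:ℤ) - r)) ≤
      (n:ℤ) * (∑ k ∈ S, (k:ℤ) * ((n:ℤ) - k)) -
        ∑ k ∈ S, ∑ l ∈ S, (↑(min k l) : ℤ) * ((n:ℤ) - ↑(max k l)) := by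
  induction S using Finset.strongInduction generalizing r q with
  | _ S ih =>
  rcases S.eq_empty_or_nonempty with rfl | hne
  · simp only [sum_empty] at hsum ⊢
    have hr0 : r = 0 := by omega
    subst hr0
    simp
  have hkM : S.max' hne ∈ S := S.max'_mem hne
  have hkm : S.min' hne ∈ S := S.min'_mem hne
  set kM := S.max' hne with hkMdef
  set km := S.min' hne with hkmdef
  have hkMle : ∀ x ∈ S, x ≤ kM := fun x hx => S.le_max' x hx
  have hkmle : ∀ x ∈ S, km ≤ x := fun x hx => S.min'_le x hx
  have hkm1 : 1 ≤ km := (hS km hkm).1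
  have hkMn : kM ≤ n - 1 := (hS kM hkM).2
  have hsubIcc : S ⊆ Finset.Icc km kM := fun x hx => mem_Icc.mpr ⟨hkmle x hx, hkMle x hx⟩
  have hcard : S.card ≤ kM + 1 - km := by
    have := Finset.card_le_card hsubIcc
    simpa [Nat.card_Icc] using this
  have hσle : (∑ k ∈ S, k) ≤ S.card * kM := by
    have := Finset.sum_le_card_nsmul S id kM (fun x hx => hkMle x hx)
    simpa [smul_eq_mul] using this
  have hm1 : 1 ≤ S.card := Finset.card_pos.mpr hne
  have dich : (r < kM ∧ r + q ≤ kM) ∨ (km ≤ r ∧ km + S.card ≤ r + q + 1) := by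
    by_contra hcon
    push_neg at hcon
    obtain ⟨h1, h2⟩ := hcon
    rcases lt_or_ge r km with hA | hB
    · have hrkM : r < kM := lt_of_lt_of_le hA (hkmle kM hkM)
      have hq : S.card + 1 ≤ q := by
        have := h1 hrkM
        omega
      have c1 : (S.card + 1) * n ≤ q * n := Nat.mul_le_mul_right n hq
      have e : (S.card + 1) * n = S.card * n + n := by ring
      have c2 : S.card * kM ≤ S.card * (n - 1) := Nat.mul_le_mul_left _ (by omega)
      have e2 : S.card * (n - 1) ≤ S.card * n := Nat.mul_le_mul_left _ (by omega)
      omega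
    · have := h2 hB
      rcases lt_or_ge r kM with hrkM | hge
      · have := h1 hrkM
        omega
      · omega
  rcases dich with ⟨hA1, hA2⟩ | ⟨hB1, hB2⟩
  · -- remove the max element
    set k := kM with hkdef
    set S' := S.erase k with hS'def
    have hsub : S' ⊂ S := Finset.erase_ssubset hkM
    have hS' : ∀ x ∈ S', 1 ≤ x ∧ x ≤ n - 1 := fun x hx => hS x (Finset.mem_of_mem_erase hx)
    have hlt : ∀ l ∈ S', l < k := fun l hl =>
      lt_of_le_of_ne (hkMle l (Finset.mem_of_mem_erase hl)) (Finset.ne_of_mem_erase hl)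
    have hσ' : (∑ x ∈ S', x) + k = ∑ x ∈ S, x := by
      rw [hS'def, add_comm]; exact Finset.add_sum_erase S id hkM
    have hq1 : 1 ≤ q := by
      have hkσ : k ≤ ∑ x ∈ S, x := Finset.single_le_sum (f := id) (fun i _ => Nat.zero_le i) hkM
      rcases Nat.eq_zero_or_pos q with h0 | h
      · rw [h0, zero_mul, add_zero] at hsum
        omega
      · exact h
    obtain ⟨q', rfl⟩ : ∃ q', q = q' + 1 := ⟨q - 1, by omega⟩
    have hqq : (q' + 1) * n = q' * n + n := by ring
    have hsum' : (∑ x ∈ S', x) = (r + n - k) + q' * n := by omega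
    have hr' : (r + n - k) < n := by omega
    have IH := ih S' hsub hS' (r + n - k) q' hsum' hr'
    -- decompose sums
    have e1 : (∑ x ∈ S, (x:ℤ) * ((n:ℤ) - x)) =
        (k:ℤ) * ((n:ℤ) - k) + ∑ x ∈ S', (x:ℤ) * ((n:ℤ) - x) :=
      (Finset.add_sum_erase S _ hkM).symm
    have d1 : (∑ K ∈ S, ∑ L ∈ S, (↑(min K L) : ℤ) * ((n:ℤ) - ↑(max K L))) =
        (∑ L ∈ S, (↑(min k L) : ℤ) * ((n:ℤ) - ↑(max k L)))
        + ∑ K ∈ S', ∑ L ∈ S, (↑(min K L) : ℤ) * ((n:ℤ) - ↑(max K L)) :=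
      (Finset.add_sum_erase S _ hkM).symm
    have d2 : (∑ L ∈ S, (↑(min k L) : ℤ) * ((n:ℤ) - ↑(max k L))) =
        (k:ℤ) * ((n:ℤ) - k) + (∑ L ∈ S', (L:ℤ)) * ((n:ℤ) - k) := by
      rw [← Finset.add_sum_erase S _ hkM]
      congr 1
      · simp
      · rw [Finset.sum_mul]
        apply Finset.sum_congr rfl
        intro L hL
        have h := hlt L hL
        rw [min_eq_right (le_of_lt h), max_eq_left (le_of_lt h)]
    have d3 : (∑ K ∈ S', ∑ L ∈ S, (↑(min K L) : ℤ) * ((n:ℤ) - ↑(max K L))) =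
        (∑ K ∈ S', (K:ℤ)) * ((n:ℤ) - k)
        + ∑ K ∈ S', ∑ L ∈ S', (↑(min K L) : ℤ) * ((n:ℤ) - ↑(max K L)) := by
      have : ∀ K ∈ S', (∑ L ∈ S, (↑(min K L) : ℤ) * ((n:ℤ) - ↑(max K L))) =
          (K:ℤ) * ((n:ℤ) - k) + ∑ L ∈ S', (↑(min K L) : ℤ) * ((n:ℤ) - ↑(max K L)) := by
        intro K hK
        rw [← Finset.add_sum_erase S _ hkM]
        congr 1
        have h := hlt K hK
        rw [min_eq_left (le_of_lt h), max_eq_right (le_of_lt h)]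
      rw [Finset.sum_congr rfl this, Finset.sum_add_distrib, Finset.sum_mul]
    -- cast facts
    have hσ'val : (∑ x ∈ S', (x:ℤ)) = (r:ℤ) + (n:ℤ) - (k:ℤ) + (q':ℤ) * n := by
      have hcast : ((∑ x ∈ S', x : ℕ) : ℤ) = ∑ x ∈ S', (x:ℤ) := by push_cast; rfl
      rw [← hcast, hsum']
      have h2 : ((r + n - k : ℕ) : ℤ) = (r:ℤ) + n - k := by omega
      push_cast at h2 ⊢
      rw [h2]
    have hr'z : ((r + n - k : ℕ) : ℤ) = (r:ℤ) + n - k := by omega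
    rw [e1, d1, d2, d3, hσ'val]
    rw [hr'z] at IH
    have hnk : (0:ℤ) ≤ (n:ℤ) - k := by omega
    have hkrq : (0:ℤ) ≤ (k:ℤ) - r - ((q':ℤ) + 1) := by omega
    have hnn : (0:ℤ) ≤ (n:ℤ) := by positivity
    have hprod : (0:ℤ) ≤ 2 * (n:ℤ) * ((n:ℤ) - k) * ((k:ℤ) - r - ((q':ℤ) + 1)) := by
      have := mul_nonneg (mul_nonneg (by linarith : (0:ℤ) ≤ 2 * (n:ℤ)) hnk) hkrq
      linarith [this]
    set W' := ∑ x ∈ S', (x:ℤ) * ((n:ℤ) - x) with hW'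
    set D' := ∑ K ∈ S', ∑ L ∈ S', (↑(min K L) : ℤ) * ((n:ℤ) - ↑(max K L)) with hD'
    have key : ((n:ℤ) - 1) * (((r:ℤ) + n - k) * ((n:ℤ) - ((r:ℤ) + n - k))) +
        (((n:ℤ) - 1) * ((k:ℤ) * ((n:ℤ) - k)) -
          2 * (((r:ℤ) + (n:ℤ) - (k:ℤ) + (q':ℤ) * n) * ((n:ℤ) - k))) -
        ((n:ℤ) - 1) * ((r:ℤ) * ((n:ℤ) - r)) =
        2 * (n:ℤ) * ((n:ℤ) - k) * ((k:ℤ) - r - ((q':ℤ) + 1)) := by ring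
    have expand : (n:ℤ) * ((k:ℤ) * ((n:ℤ) - k) + W') -
        ((k:ℤ) * ((n:ℤ) - k) + ((r:ℤ) + (n:ℤ) - (k:ℤ) + (q':ℤ) * n) * ((n:ℤ) - k) +
          (((r:ℤ) + (n:ℤ) - (k:ℤ) + (q':ℤ) * n) * ((n:ℤ) - k) + D')) =
        ((n:ℤ) * W' - D') + (((n:ℤ) - 1) * ((k:ℤ) * ((n:ℤ) - k)) -
          2 * (((r:ℤ) + (n:ℤ) - (k:ℤ) + (q':ℤ) * n) * ((n:ℤ) - k))) := by ring
    linarith [IH, key, expand, hprod]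
  · -- remove the min element
    set k := km with hkdef
    set S' := S.erase k with hS'def
    have hsub : S' ⊂ S := Finset.erase_ssubset hkm
    have hS' : ∀ x ∈ S', 1 ≤ x ∧ x ≤ n - 1 := fun x hx => hS x (Finset.mem_of_mem_erase hx)
    have hlt : ∀ l ∈ S', k < l := fun l hl =>
      lt_of_le_of_ne (hkmle l (Finset.mem_of_mem_erase hl)) (Ne.symm (Finset.ne_of_mem_erase hl))
    have hσ' : (∑ x ∈ S', x) + k = ∑ x ∈ S, x := by
      rw [hS'def, add_comm]; exact Finset.add_sum_erase S id hkm
    have hkr : k ≤ r := hB1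
    have hsum' : (∑ x ∈ S', x) = (r - k) + q * n := by omega
    have hr' : (r - k) < n := by omega
    have IH := ih S' hsub hS' (r - k) q hsum' hr'
    have hcarde : S'.card = S.card - 1 := Finset.card_erase_of_mem hkm
    have e1 : (∑ x ∈ S, (x:ℤ) * ((n:ℤ) - x)) =
        (k:ℤ) * ((n:ℤ) - k) + ∑ x ∈ S', (x:ℤ) * ((n:ℤ) - x) :=
      (Finset.add_sum_erase S _ hkm).symm
    have d1 : (∑ K ∈ S, ∑ L ∈ S, (↑(min K L) : ℤ) * ((n:ℤ) - ↑(max K L))) =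
        (∑ L ∈ S, (↑(min k L) : ℤ) * ((n:ℤ) - ↑(max k L)))
        + ∑ K ∈ S', ∑ L ∈ S, (↑(min K L) : ℤ) * ((n:ℤ) - ↑(max K L)) :=
      (Finset.add_sum_erase S _ hkm).symm
    have d2 : (∑ L ∈ S, (↑(min k L) : ℤ) * ((n:ℤ) - ↑(max k L))) =
        (k:ℤ) * ((n:ℤ) - k) + ∑ L ∈ S', (k:ℤ) * ((n:ℤ) - L) := by
      rw [← Finset.add_sum_erase S _ hkm]
      congr 1
      · simp
      · apply Finset.sum_congr rfl
        intro L hL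
        have h := hlt L hL
        rw [min_eq_left (le_of_lt h), max_eq_right (le_of_lt h)]
    have d3 : (∑ K ∈ S', ∑ L ∈ S, (↑(min K L) : ℤ) * ((n:ℤ) - ↑(max K L))) =
        (∑ K ∈ S', (k:ℤ) * ((n:ℤ) - K))
        + ∑ K ∈ S', ∑ L ∈ S', (↑(min K L) : ℤ) * ((n:ℤ) - ↑(max K L)) := by
      have : ∀ K ∈ S', (∑ L ∈ S, (↑(min K L) : ℤ) * ((n:ℤ) - ↑(max K L))) =
          (k:ℤ) * ((n:ℤ) - K) + ∑ L ∈ S', (↑(min K L) : ℤ) * ((n:ℤ) - ↑(max K L)) := by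
        intro K hK
        rw [← Finset.add_sum_erase S _ hkm]
        congr 1
        have h := hlt K hK
        rw [min_eq_right (le_of_lt h), max_eq_left (le_of_lt h)]
      rw [Finset.sum_congr rfl this, Finset.sum_add_distrib]
    have dd : (∑ L ∈ S', (k:ℤ) * ((n:ℤ) - L)) =
        (k:ℤ) * ((S'.card : ℤ) * n - ∑ L ∈ S', (L:ℤ)) := by
      have h1 : (S'.card : ℤ) * n - ∑ L ∈ S', (L:ℤ) = ∑ L ∈ S', ((n:ℤ) - L) := by
        rw [Finset.sum_sub_distrib, Finset.sum_const, nsmul_eq_mul]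
      rw [h1, Finset.mul_sum]
    have hσ'val : (∑ x ∈ S', (x:ℤ)) = (r:ℤ) + (q:ℤ) * n - k := by
      have hcast : ((∑ x ∈ S', x : ℕ) : ℤ) = ∑ x ∈ S', (x:ℤ) := by push_cast; rfl
      rw [← hcast, hsum']
      have h2 : ((r - k : ℕ) : ℤ) = (r:ℤ) - k := by omega
      push_cast at h2 ⊢
      rw [h2]
      ring
    have hr'z : ((r - k : ℕ) : ℤ) = (r:ℤ) - k := by omega
    have hmz : ((S'.card : ℕ) : ℤ) = (S.card : ℤ) - 1 := by omega
    rw [e1, d1, d2, d3, dd, hσ'val, hmz]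
    rw [hr'z] at IH
    have hkz : (0:ℤ) ≤ (k:ℤ) := by positivity
    have hnn : (0:ℤ) ≤ (n:ℤ) := by positivity
    have hcond : (0:ℤ) ≤ (r:ℤ) + q - k - ((S.card : ℤ) - 1) := by omega
    have hprod : (0:ℤ) ≤ 2 * (k:ℤ) * (n:ℤ) * ((r:ℤ) + q - k - ((S.card : ℤ) - 1)) := by
      have := mul_nonneg (mul_nonneg (by linarith : (0:ℤ) ≤ 2 * (k:ℤ)) hnn) hcond
      linarith [this]
    set W' := ∑ x ∈ S', (x:ℤ) * ((n:ℤ) - x) with hW'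
    set D' := ∑ K ∈ S', ∑ L ∈ S', (↑(min K L) : ℤ) * ((n:ℤ) - ↑(max K L)) with hD'
    have key : ((n:ℤ) - 1) * (((r:ℤ) - k) * ((n:ℤ) - ((r:ℤ) - k))) +
        (((n:ℤ) - 1) * ((k:ℤ) * ((n:ℤ) - k)) -
          2 * ((k:ℤ) * (((S.card : ℤ) - 1) * n - ((r:ℤ) + (q:ℤ) * n - k)))) -
        ((n:ℤ) - 1) * ((r:ℤ) * ((n:ℤ) - r)) =
        2 * (k:ℤ) * (n:ℤ) * ((r:ℤ) + q - k - ((S.card : ℤ) - 1)) := by ring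
    have expand : (n:ℤ) * ((k:ℤ) * ((n:ℤ) - k) + W') -
        ((k:ℤ) * ((n:ℤ) - k) + (k:ℤ) * (((S.card : ℤ) - 1) * n - ((r:ℤ) + (q:ℤ) * n - k)) +
          ((k:ℤ) * (((S.card : ℤ) - 1) * n - ((r:ℤ) + (q:ℤ) * n - k)) + D')) =
        ((n:ℤ) * W' - D') + (((n:ℤ) - 1) * ((k:ℤ) * ((n:ℤ) - k)) -
          2 * ((k:ℤ) * (((S.card : ℤ) - 1) * n - ((r:ℤ) + (q:ℤ) * n - k)))) := by ring
    linarith [IH, key, expand, hprod]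


lemma pair_diff_sq (n : ℕ) (a : ℕ → ℤ) :
    ∑ j ∈ range n, ∑ i ∈ range j, (a i - a j)^2
      = (n:ℤ) * (∑ i ∈ range n, (a i)^2) - (∑ i ∈ range n, a i)^2 := by
  induction n with
  | zero => simp
  | succ m ih =>
    rw [Finset.sum_range_succ, Finset.sum_range_succ (fun i => (a i)^2), Finset.sum_range_succ a]
    have e : ∑ i ∈ range m, (a i - a m)^2
        = (∑ i ∈ range m, (a i)^2) - 2 * a m * (∑ i ∈ range m, a i) + (m:ℤ) * (a m)^2 := by
      have h : ∀ i ∈ range m, (a i - a m)^2 = (a i)^2 - 2 * a m * (a i) + (a m)^2 := by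
        intro i _; ring
      rw [Finset.sum_congr rfl h, Finset.sum_add_distrib, Finset.sum_sub_distrib,
        ← Finset.mul_sum, Finset.sum_const, card_range, nsmul_eq_mul]
    rw [e]
    push_cast
    linear_combination ih

lemma mainN (n : ℕ) (hn : 2 ≤ n) (h : ℕ) (hnh : n = h + h) (a : ℕ → ℤ)
    (hstep : ∀ K, 1 ≤ K → K < n → a (K-1) - a K = 0 ∨ a (K-1) - a K = 1)
    (c : ℤ) (hc : c = ∑ i ∈ range n, a i) (hc0 : 0 ≤ c) (hcn : c ≤ (h:ℤ)) :
    12 * ((n:ℤ) * (∑ i ∈ range n, (a i)^2) - c^2)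
      ≤ 12*((n:ℤ)-1)*c^2 + (n:ℤ)^2*((n:ℤ)-1)*((n:ℤ)-2) := by
  set t : ℕ → ℤ := fun K => 1 - a (K-1) + a K with htdef
  have ht01 : ∀ K, 1 ≤ K → K < n → t K = 0 ∨ t K = 1 := by
    intro K h1 h2
    rcases hstep K h1 h2 with hh | hh
    · right; simp only [htdef]; omega
    · left; simp only [htdef]; omega
  have tele : ∀ i j : ℕ, i ≤ j → j < n →
      a i - a j = ((j:ℤ) - (i:ℤ)) - ∑ K ∈ Finset.Ioc i j, t K := by
    intro i j hij
    induction j, hij using Nat.le_induction with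
    | base => intro _; simp
    | succ j hij ihj =>
      intro hjn
      have ihh := ihj (by omega)
      rw [Finset.sum_Ioc_succ_top hij]
      have htj : t (j+1) = 1 - a j + a (j+1) := by simp only [htdef, Nat.add_sub_cancel]
      push_cast
      rw [htj]
      push_cast at ihh
      linarith [ihh]
  have sdef : ∀ j i : ℕ, i ≤ j → j < n →
      a i - a j = ((j:ℤ) - (i:ℤ)) - ∑ K ∈ range n, (if i < K ∧ K ≤ j then t K else 0) := by
    intro j i hij hj
    have h1 : (∑ K ∈ Finset.Ioc i j, t K)
        = ∑ K ∈ range n, (if i < K ∧ K ≤ j then t K else 0) := by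
      rw [← Finset.sum_filter]
      congr 1
      ext x
      simp only [Finset.mem_filter, Finset.mem_range, Finset.mem_Ioc]
      omega
    rw [← h1]
    exact tele i j hij hj
  have expandE : ∑ j ∈ range n, ∑ i ∈ range j, (a i - a j)^2
      = (∑ j ∈ range n, ∑ i ∈ range j, ((j:ℤ) - (i:ℤ))^2)
        - (∑ j ∈ range n, ∑ i ∈ range j,
            2*((j:ℤ) - (i:ℤ)) * (∑ K ∈ range n, (if i < K ∧ K ≤ j then t K else 0)))
        + (∑ j ∈ range n, ∑ i ∈ range j,
            (∑ K ∈ range n, (if i < K ∧ K ≤ j then t K else 0))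
              * (∑ K ∈ range n, (if i < K ∧ K ≤ j then t K else 0))) := by
    rw [← Finset.sum_sub_distrib, ← Finset.sum_add_distrib]
    apply Finset.sum_congr rfl
    intro j hj
    rw [← Finset.sum_sub_distrib, ← Finset.sum_add_distrib]
    apply Finset.sum_congr rfl
    intro i hi
    rw [sdef j i (le_of_lt (Finset.mem_range.mp hi)) (Finset.mem_range.mp hj)]
    ring
  have hA2 : (∑ j ∈ range n, ∑ i ∈ range j,
        2*((j:ℤ) - (i:ℤ)) * (∑ K ∈ range n, (if i < K ∧ K ≤ j then t K else 0)))
      = ∑ K ∈ range n, ((n:ℤ) * (K:ℤ) * ((n:ℤ) - K)) * t K := by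
    have step2 : (∑ j ∈ range n, ∑ i ∈ range j,
          2*((j:ℤ) - (i:ℤ)) * (∑ K ∈ range n, (if i < K ∧ K ≤ j then t K else 0)))
        = ∑ j ∈ range n, ∑ i ∈ range j, ∑ K ∈ range n,
            (if i < K ∧ K ≤ j then 2*((j:ℤ) - (i:ℤ)) else 0) * t K := by
      apply Finset.sum_congr rfl
      intro j _
      apply Finset.sum_congr rfl
      intro i _
      rw [Finset.mul_sum]
      apply Finset.sum_congr rfl
      intro K _
      split_ifs with hcond
      · ring
      · ring
    rw [step2, swap_in]
    apply Finset.sum_congr rfl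
    intro K hK
    have e1 : ∀ j ∈ range n, (∑ i ∈ range j,
        (if i < K ∧ K ≤ j then 2*((j:ℤ) - (i:ℤ)) else 0) * t K)
        = (∑ i ∈ range j, (if i < K ∧ K ≤ j then 2*((j:ℤ) - (i:ℤ)) else 0)) * t K :=
      fun j _ => (Finset.sum_mul _ _ _).symm
    rw [Finset.sum_congr rfl e1, ← Finset.sum_mul, count2 n K (le_of_lt (Finset.mem_range.mp hK))]
  have hA3 : (∑ j ∈ range n, ∑ i ∈ range j,
        (∑ K ∈ range n, (if i < K ∧ K ≤ j then t K else 0))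
          * (∑ K ∈ range n, (if i < K ∧ K ≤ j then t K else 0)))
      = ∑ K ∈ range n, ∑ L ∈ range n,
          ((min K L : ℕ) : ℤ) * ((n:ℤ) - ((max K L : ℕ) : ℤ)) * (t K * t L) := by
    have step2 : (∑ j ∈ range n, ∑ i ∈ range j,
          (∑ K ∈ range n, (if i < K ∧ K ≤ j then t K else 0))
            * (∑ K ∈ range n, (if i < K ∧ K ≤ j then t K else 0)))
        = ∑ j ∈ range n, ∑ i ∈ range j, ∑ K ∈ range n, ∑ L ∈ range n,
            (if i < min K L ∧ max K L ≤ j then t K * t L else 0) := by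
      apply Finset.sum_congr rfl
      intro j _
      apply Finset.sum_congr rfl
      intro i _
      rw [Finset.sum_mul_sum]
      apply Finset.sum_congr rfl
      intro K _
      apply Finset.sum_congr rfl
      intro L _
      have hprod : (if i < K ∧ K ≤ j then t K else 0) * (if i < L ∧ L ≤ j then t L else 0)
          = if (i < K ∧ K ≤ j) ∧ (i < L ∧ L ≤ j) then t K * t L else 0 := by
        by_cases hA : (i < K ∧ K ≤ j) <;> by_cases hB : (i < L ∧ L ≤ j) <;>
          simp [hA, hB]
      rw [hprod]
      have hiff : ((i < K ∧ K ≤ j) ∧ (i < L ∧ L ≤ j)) ↔ (i < min K L ∧ max K L ≤ j) := by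
        omega
      rw [if_congr hiff rfl rfl]
    rw [step2]
    rw [swap_in n (fun j i K => ∑ L ∈ range n,
      (if i < min K L ∧ max K L ≤ j then t K * t L else 0))]
    apply Finset.sum_congr rfl
    intro K hK
    rw [swap_in n (fun j i L => (if i < min K L ∧ max K L ≤ j then t K * t L else 0))]
    apply Finset.sum_congr rfl
    intro L hL
    have hmax : max K L ≤ n := by
      have h1 := Finset.mem_range.mp hK
      have h2 := Finset.mem_range.mp hL
      omega
    exact countlem n (min K L) (max K L) (t K * t L) min_le_max hmax
  -- identity for c
  have hterm : ∀ i ∈ range n, a i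
      = a (n-1) + (((n-1:ℕ):ℤ) - (i:ℤ))
        - ∑ K ∈ range n, (if i < K ∧ K ≤ n-1 then t K else 0) := by
    intro i hi
    have hi' : i ≤ n - 1 := by have := Finset.mem_range.mp hi; omega
    have := sdef (n-1) i hi' (by omega)
    linarith [this]
  have hrefl : (∑ i ∈ range n, (((n-1:ℕ):ℤ) - (i:ℤ))) = ∑ i ∈ range n, (i:ℤ) := by
    rw [← Finset.sum_range_reflect (fun i => (i:ℤ)) n]
    apply Finset.sum_congr rfl
    intro i hi
    have hi' : i < n := Finset.mem_range.mp hi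
    have hcast : ((n - 1 - i : ℕ):ℤ) = ((n-1:ℕ):ℤ) - (i:ℤ) := by omega
    rw [hcast]
  have hswap5 : (∑ i ∈ range n, ∑ K ∈ range n, (if i < K ∧ K ≤ n-1 then t K else 0))
      = ∑ K ∈ range n, (K:ℤ) * t K := by
    rw [Finset.sum_comm]
    apply Finset.sum_congr rfl
    intro K hK
    exact countsingle n K (t K) (Finset.mem_range.mp hK)
  have hcid : c = (n:ℤ) * a (n-1) + (∑ i ∈ range n, (i:ℤ)) - ∑ K ∈ range n, (K:ℤ) * t K := by
    rw [hc, Finset.sum_congr rfl hterm, Finset.sum_sub_distrib, Finset.sum_add_distrib,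
      Finset.sum_const, card_range, nsmul_eq_mul, hrefl, hswap5]
  -- restrict to the finset S of flats
  set S : Finset ℕ := (range n).filter (fun K => 1 ≤ K ∧ t K = 1) with hSdef
  have hbridge : ∀ W : ℕ → ℤ, W 0 = 0 → (∑ K ∈ range n, W K * t K) = ∑ K ∈ S, W K := by
    intro W hW0
    rw [← Finset.sum_filter_add_sum_filter_not (range n) (fun K => 1 ≤ K ∧ t K = 1)
      (fun K => W K * t K)]
    have hz : (∑ K ∈ (range n).filter (fun K => ¬(1 ≤ K ∧ t K = 1)), W K * t K) = 0 := by
      apply Finset.sum_eq_zero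
      intro K hK
      simp only [Finset.mem_filter, Finset.mem_range] at hK
      obtain ⟨hKn, hnot⟩ := hK
      rcases Nat.eq_zero_or_pos K with h0 | h1
      · subst h0; rw [hW0]; ring
      · have h01 := ht01 K h1 hKn
        have ht0 : t K = 0 := by tauto
        rw [ht0]; ring
    rw [hz, add_zero, hSdef]
    apply Finset.sum_congr rfl
    intro K hK
    simp only [Finset.mem_filter] at hK
    rw [hK.2.2]
    ring
  have hWa : (∑ K ∈ range n, ((n:ℤ) * (K:ℤ) * ((n:ℤ) - K)) * t K)
      = (n:ℤ) * ∑ K ∈ S, (K:ℤ) * ((n:ℤ) - K) := by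
    rw [hbridge (fun K => (n:ℤ) * (K:ℤ) * ((n:ℤ) - K)) (by simp), Finset.mul_sum]
    apply Finset.sum_congr rfl
    intro K _
    ring
  have hsig : (∑ K ∈ range n, (K:ℤ) * t K) = ∑ K ∈ S, (K:ℤ) :=
    hbridge (fun K => (K:ℤ)) (by simp)
  have hDa : (∑ K ∈ range n, ∑ L ∈ range n,
        ((min K L : ℕ) : ℤ) * ((n:ℤ) - ((max K L : ℕ) : ℤ)) * (t K * t L))
      = ∑ K ∈ S, ∑ L ∈ S, ((min K L : ℕ) : ℤ) * ((n:ℤ) - ((max K L : ℕ) : ℤ)) := by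
    have inner : ∀ K, (∑ L ∈ range n,
        ((min K L : ℕ) : ℤ) * ((n:ℤ) - ((max K L : ℕ) : ℤ)) * (t K * t L))
        = (∑ L ∈ S, ((min K L : ℕ) : ℤ) * ((n:ℤ) - ((max K L : ℕ) : ℤ))) * t K := by
      intro K
      have e : (∑ L ∈ range n,
          ((min K L : ℕ) : ℤ) * ((n:ℤ) - ((max K L : ℕ) : ℤ)) * (t K * t L))
          = ∑ L ∈ range n,
            (((min K L : ℕ) : ℤ) * ((n:ℤ) - ((max K L : ℕ) : ℤ)) * t K) * t L := by
        apply Finset.sum_congr rfl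
        intro L _
        ring
      rw [e, hbridge (fun L => ((min K L : ℕ) : ℤ) * ((n:ℤ) - ((max K L : ℕ) : ℤ)) * t K)
        (by simp), Finset.sum_mul]
    have outer : (∑ K ∈ range n, ∑ L ∈ range n,
        ((min K L : ℕ) : ℤ) * ((n:ℤ) - ((max K L : ℕ) : ℤ)) * (t K * t L))
        = ∑ K ∈ range n,
            (∑ L ∈ S, ((min K L : ℕ) : ℤ) * ((n:ℤ) - ((max K L : ℕ) : ℤ))) * t K := by
      apply Finset.sum_congr rfl
      intro K _
      exact inner K
    rw [outer, hbridge (fun K => ∑ L ∈ S, ((min K L : ℕ) : ℤ) * ((n:ℤ) - ((max K L : ℕ) : ℤ)))]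
    apply Finset.sum_eq_zero
    intro L _
    simp
  -- set up r and q for setlem
  have hn2 : (n:ℤ) = 2 * (h:ℤ) := by
    have hcast : ((n:ℕ):ℤ) = ((h + h : ℕ):ℤ) := by exact_mod_cast congrArg (Nat.cast (R := ℤ)) hnh
    push_cast at hcast
    linarith
  have hh1 : 1 ≤ h := by omega
  have hhz1 : (1:ℤ) ≤ (h:ℤ) := by exact_mod_cast hh1
  have hsigcast : ((∑ k ∈ S, k : ℕ) : ℤ) = ∑ K ∈ S, (K:ℤ) := by push_cast; rfl
  have hsig0 : (0:ℤ) ≤ ((∑ k ∈ S, k : ℕ) : ℤ) := by positivity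
  have h2sig : 2 * ((∑ k ∈ S, k : ℕ) : ℤ) = 2*(n:ℤ)*a (n-1) + (n:ℤ)*((n:ℤ)-1) - 2*c := by
    have hid := sum_id' n
    rw [hsigcast, ← hsig]
    linarith [hcid, hid]
  set qz : ℤ := a (n-1) + (h:ℤ) - 1 with hqzdef
  have hqzval : ((∑ k ∈ S, k : ℕ) : ℤ) = ((h:ℤ) - c) + qz * (n:ℤ) := by
    have h2 : 2 * ((∑ k ∈ S, k : ℕ) : ℤ) = 2 * (((h:ℤ) - c) + qz * (n:ℤ)) := by
      rw [hqzdef]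
      linear_combination h2sig + ((n:ℤ) + 1) * hn2
    linarith [h2]
  have hq0 : 0 ≤ qz := by
    by_contra hq
    push_neg at hq
    have hq1 : qz ≤ -1 := by omega
    have hmul : qz * (n:ℤ) ≤ -1 * (n:ℤ) :=
      mul_le_mul_of_nonneg_right hq1 (by positivity)
    linarith [hsig0, hqzval, hc0, hn2, hhz1]
  set rN : ℕ := ((h:ℤ) - c).toNat with hrNdef
  set qN : ℕ := qz.toNat with hqNdef
  have hrz : ((rN:ℕ):ℤ) = (h:ℤ) - c := Int.toNat_of_nonneg (by linarith)
  have hqz2 : ((qN:ℕ):ℤ) = qz := Int.toNat_of_nonneg hq0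
  have hsumS : (∑ k ∈ S, k) = rN + qN * n := by
    have hcast : ((∑ k ∈ S, k : ℕ):ℤ) = ((rN + qN * n : ℕ):ℤ) := by
      push_cast
      rw [hrz, hqz2]
      linarith [hqzval]
    exact_mod_cast hcast
  have hrN : rN < n := by
    have hlt : ((rN:ℕ):ℤ) < (n:ℤ) := by rw [hrz]; linarith
    exact_mod_cast hlt
  have hSmem : ∀ k ∈ S, 1 ≤ k ∧ k ≤ n - 1 := by
    intro k hk
    simp only [hSdef, Finset.mem_filter, Finset.mem_range] at hk
    omega
  have big := setlem n (by omega) S hSmem rN qN hsumS hrN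
  rw [hrz] at big
  have hE := pair_diff_sq n a
  rw [← hc] at hE
  have hA1 := pairs_sq n
  have hEQ : 12 * ((n:ℤ) * (∑ i ∈ range n, (a i)^2) - c^2)
      = (n:ℤ)^2*((n:ℤ)^2 - 1) - 12*((n:ℤ)*(∑ K ∈ S, (K:ℤ)*((n:ℤ)-K)))
        + 12*(∑ K ∈ S, ∑ L ∈ S, ((min K L:ℕ):ℤ)*((n:ℤ) - ((max K L:ℕ):ℤ))) := by
    rw [← hWa, ← hDa, ← hA2, ← hA3, ← hA1]
    linarith [hE, expandE]
  have key : (n:ℤ)^2*((n:ℤ)^2-1) - 12*(((n:ℤ)-1)*((((h:ℤ)-c))*((n:ℤ)-(((h:ℤ)-c)))))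
      = 12*((n:ℤ)-1)*c^2 + (n:ℤ)^2*((n:ℤ)-1)*((n:ℤ)-2) := by
    linear_combination ((n:ℤ)-1)*(3*(n:ℤ) - 6*(h:ℤ) + 12*c)*hn2
  linarith [big, hEQ, key]
theorem stmt_5 (n : ℕ) (hn : 2 ≤ n) (hev : Even n) (b : Fin n → ℤ) (hb : Antitone b)
    (hgap : ∀ i : Fin n, ∀ j : Fin n, (j : ℕ) = (i : ℕ) + 1 → b i - b j ≤ 1)
    (c : ℤ) (hc : c = ∑ i : Fin n, b i) (hc0 : 0 ≤ c) (hcn : 2 * c ≤ (n : ℤ)) :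
    4 * (∑ i : Fin n, ∑ j : Fin n, if i < j then b i * b j else 0) ≥
      -(n.choose 3 : ℤ) := by
  classical
  set a : ℕ → ℤ := fun i => if hi : i < n then b ⟨i, hi⟩ else 0 with hadef
  have haval : ∀ i : Fin n, a (i : ℕ) = b i := by
    intro i
    simp only [hadef, i.isLt, dif_pos, Fin.eta]
  have hstep : ∀ K, 1 ≤ K → K < n → a (K-1) - a K = 0 ∨ a (K-1) - a K = 1 := by
    intro K h1 h2
    have hK1 : K - 1 < n := by omega
    have e1 : a (K-1) = b ⟨K-1, hK1⟩ := by simp only [hadef, hK1, dif_pos]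
    have e2 : a K = b ⟨K, h2⟩ := by simp only [hadef, h2, dif_pos]
    have hle : b ⟨K-1, hK1⟩ ≤ b ⟨K-1, hK1⟩ := le_refl _
    have hmono : b ⟨K, h2⟩ ≤ b ⟨K-1, hK1⟩ := by
      apply hb
      simp only [Fin.mk_le_mk]
      omega
    have hgap' := hgap ⟨K-1, hK1⟩ ⟨K, h2⟩ (by simp; omega)
    rw [e1, e2]
    omega
  obtain ⟨h, hnh⟩ := hev
  have hn2 : ((n:ℕ):ℤ) = (h:ℤ) + (h:ℤ) := by exact_mod_cast congrArg (Nat.cast (R := ℤ)) hnh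
  have hcsum : c = ∑ i ∈ Finset.range n, a i := by
    rw [hc, ← Fin.sum_univ_eq_sum_range (fun i => a i) n]
    exact Finset.sum_congr rfl (fun i _ => (haval i).symm)
  have hpair : (∑ i : Fin n, ∑ j : Fin n, if i < j then b i * b j else 0)
      = ∑ j ∈ Finset.range n, ∑ i ∈ Finset.range j, a i * a j := by
    rw [← tri_reshape n (fun i j => a i * a j)]
    rw [← Fin.sum_univ_eq_sum_range
      (fun i => ∑ j ∈ Finset.range n, if i < j then a i * a j else 0) n]
    apply Finset.sum_congr rfl
    intro i _
    rw [← Fin.sum_univ_eq_sum_range (fun j => if (i:ℕ) < j then a (i:ℕ) * a j else 0) n]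
    apply Finset.sum_congr rfl
    intro j _
    rw [haval i, haval j]
    exact if_congr Fin.lt_def rfl rfl
  have hch : ((n.choose 3 : ℕ):ℤ) * 6 = (n:ℤ)*((n:ℤ)-1)*((n:ℤ)-2) := by
    have hdvd : Nat.factorial 3 ∣ n.descFactorial 3 := Nat.factorial_dvd_descFactorial n 3
    have heq : n.choose 3 = n.descFactorial 3 / Nat.factorial 3 :=
      Nat.choose_eq_descFactorial_div_factorial n 3
    have h6 : n.choose 3 * 6 = n.descFactorial 3 := by
      rw [heq]
      have : Nat.factorial 3 = 6 := rfl
      rw [this] at hdvd ⊢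
      exact Nat.div_mul_cancel hdvd
    have hdesc : n.descFactorial 3 = (n-2) * ((n-1) * (n * 1)) := rfl
    have h6' : n.choose 3 * 6 = (n-2) * ((n-1) * (n * 1)) := by rw [h6, hdesc]
    have hz := congrArg (Nat.cast (R := ℤ)) h6'
    push_cast [Nat.cast_sub (by omega : 2 ≤ n), Nat.cast_sub (by omega : 1 ≤ n)] at hz
    linarith [hz]
  have hcle : c ≤ (h:ℤ) := by linarith [hcn, hn2]
  have main := mainN n hn h hnh a hstep c hcsum hc0 hcle
  have hsq : c^2 = (∑ i ∈ Finset.range n, (a i)^2)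
      + 2 * ∑ j ∈ Finset.range n, ∑ i ∈ Finset.range j, a i * a j := by
    rw [hcsum]
    exact sq_sum_split n a
  rw [ge_iff_le, hpair]
  set P := ∑ j ∈ Finset.range n, ∑ i ∈ Finset.range j, a i * a j with hPdef
  set Q := ∑ i ∈ Finset.range n, (a i)^2 with hQdef
  have key : (6*(n:ℤ)) * (4*P + ((n.choose 3 : ℕ):ℤ))
      = (12*((n:ℤ)-1)*c^2 + (n:ℤ)^2*((n:ℤ)-1)*((n:ℤ)-2)) - 12*((n:ℤ)*Q - c^2) := by
    linear_combination (n:ℤ)*hch - 12*(n:ℤ)*hsq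
  have hpos : 0 ≤ (6*(n:ℤ)) * (4*P + ((n.choose 3 : ℕ):ℤ)) := by
    rw [key]
    linarith [main]
  by_contra hcon
  push_neg at hcon
  have hneg : 4*P + ((n.choose 3 : ℕ):ℤ) < 0 := by linarith [hcon]
  have : (6*(n:ℤ)) * (4*P + ((n.choose 3 : ℕ):ℤ)) < 0 := by
    apply mul_neg_of_pos_of_neg
    · positivity
    · exact hneg
  linarith
end

section
/- Let n be odd, let b_1 ≥ ... ≥ b_n be integers with no gap (b_i - b_{i+1} ≤ 1), and suppose Σ b_i = c̄ where 0 ≤ c̄ ≤ n/2. Then 4·Σ_{1≤i<j≤n} b_i b_j ≥ -C(n+1,3) + 2(n-1)·c̄. -/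
open Finset

private lemma gauss1 (t : ℕ) : 2 * (∑ k ∈ range t, (k:ℤ)) = t * (t - 1) := by
  induction t with
  | zero => simp
  | succ t ih => rw [sum_range_succ]; push_cast at ih ⊢; linear_combination ih

private lemma gauss2 (t : ℕ) : 6 * (∑ k ∈ range t, (k:ℤ)^2) = t * (t - 1) * (2*t - 1) := by
  induction t with
  | zero => simp
  | succ t ih => rw [sum_range_succ]; push_cast at ih ⊢; linear_combination ih

private lemma choose2 (k : ℕ) : 2 * (k.choose 2 : ℤ) = k * (k - 1) := by
  induction k with
  | zero => simp
  | succ k ih =>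
      rw [Nat.choose_succ_succ]
      push_cast at ih ⊢
      rw [Nat.choose_one_right] at *
      linear_combination ih

private lemma choose3 (k : ℕ) : 6 * (k.choose 3 : ℤ) = k * (k - 1) * (k - 2) := by
  induction k with
  | zero => simp
  | succ k ih =>
      rw [Nat.choose_succ_succ]
      push_cast at ih ⊢
      linear_combination ih + 3 * choose2 k

set_option maxHeartbeats 1000000 in
theorem stmt_6 (n : ℕ) (hn : 1 ≤ n) (hodd : Odd n) (b : Fin n → ℤ) (hb : Antitone b)
    (hgap : ∀ i : Fin n, ∀ j : Fin n, (j : ℕ) = (i : ℕ) + 1 → b i - b j ≤ 1)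
    (c : ℤ) (hc : c = ∑ i : Fin n, b i) (hc0 : 0 ≤ c) (hcn : 2 * c ≤ (n : ℤ)) :
    4 * (∑ i : Fin n, ∑ j : Fin n, if i < j then b i * b j else 0) ≥
      -((n + 1).choose 3 : ℤ) + 2 * ((n : ℤ) - 1) * c := by
  obtain ⟨m, hm⟩ := hodd
  have hnZ : (n:ℤ) = 2*(m:ℤ)+1 := by rw [hm]; push_cast; ring
  have hcm : c ≤ (m:ℤ) := by rw [hnZ] at hcn; omega
  -- the clamped extension of b to ℕ
  have hlt : ∀ k : ℕ, min k (n-1) < n := fun k => by omega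
  set B : ℕ → ℤ := fun k => b ⟨min k (n-1), hlt k⟩ with hBdef
  have hBeq : ∀ (k : ℕ) (h : k < n), B k = b ⟨k, h⟩ := by
    intro k h
    simp only [hBdef]
    congr 1
    apply Fin.ext
    show min k (n-1) = k
    omega
  have hBanti : ∀ k l : ℕ, k ≤ l → B l ≤ B k := by
    intro k l hkl
    refine hb ?_
    rw [Fin.mk_le_mk]
    omega
  have hBstep : ∀ k : ℕ, B k - B (k+1) ≤ 1 := by
    intro k
    by_cases h : k + 1 < n
    · have h1 : k < n := by omega
      rw [hBeq k h1, hBeq (k+1) h]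
      exact hgap _ _ (by simp)
    · have he : min k (n-1) = min (k+1) (n-1) := by omega
      simp only [hBdef, he]
      simp
  have hBgap : ∀ k d : ℕ, B k - B (k + d) ≤ (d:ℤ) := by
    intro k d
    induction d with
    | zero => simp
    | succ d ih =>
        have h2 := hBstep (k + d)
        have he : k + (d+1) = (k+d)+1 := by omega
        rw [he]
        push_cast
        push_cast at ih
        linarith
  have hsum : ∑ k ∈ range n, B k = c := by
    rw [← Fin.sum_univ_eq_sum_range (fun k => B k) n, hc]
    refine Finset.sum_congr rfl fun i _ => ?_
    rw [hBeq i.1 i.2]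
  -- the extremal sequence A
  set A : ℕ → ℤ := fun k => (m:ℤ) - k + (if (n:ℤ) - c ≤ (k:ℤ) then 1 else 0) with hAdef
  have hApart : ∀ t : ℕ, 2 * (∑ k ∈ range t, A k)
      = 2*t*m - t*(t-1) + 2 * max 0 ((t:ℤ) - n + c) := by
    intro t
    induction t with
    | zero =>
        simp only [sum_range_zero, Nat.cast_zero, mul_zero, zero_mul, zero_sub]
        rw [max_eq_left (by rw [hnZ]; linarith)]
        ring
    | succ t ih =>
        rw [sum_range_succ]
        by_cases h : (n:ℤ) - c ≤ (t:ℤ)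
        · have hA : A t = (m:ℤ) - t + 1 := by simp only [hAdef, if_pos h]
          have e1 : max 0 ((t:ℤ) - n + c) = (t:ℤ) - n + c := max_eq_right (by linarith)
          have e2 : max 0 ((((t+1):ℕ):ℤ) - n + c) = (((t+1):ℕ):ℤ) - n + c :=
            max_eq_right (by push_cast; linarith)
          rw [e1] at ih
          rw [e2, hA]
          push_cast at ih ⊢
          linear_combination ih
        · have hA : A t = (m:ℤ) - t := by simp only [hAdef, if_neg h]; ring
          have e1 : max 0 ((t:ℤ) - n + c) = 0 := max_eq_left (by linarith)
          have e2 : max 0 ((((t+1):ℕ):ℤ) - n + c) = 0 :=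
            max_eq_left (by push_cast; linarith)
          rw [e1] at ih
          rw [e2, hA]
          push_cast at ih ⊢
          linear_combination ih
  -- majorization
  have hS : ∀ t : ℕ, 1 ≤ t → t ≤ n - 1 →
      2 * (∑ k ∈ range t, B k) ≤ 2 * (∑ k ∈ range t, A k) := by
    intro t ht1 htn
    have htn' : t ≤ n := by omega
    set v := B t with hv
    have h1 : 2 * (∑ k ∈ range t, B k) ≤ 2*(t:ℤ)*v + t*(t+1) := by
      have hpw : ∀ k ∈ range t, B k ≤ v + ((t:ℤ) - k) := by
        intro k hk
        rw [mem_range] at hk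
        have hg := hBgap k (t - k)
        have e : k + (t - k) = t := by omega
        rw [e] at hg
        have e2 : ((t - k : ℕ):ℤ) = (t:ℤ) - k := by omega
        rw [e2] at hg
        linarith
      have hs := Finset.sum_le_sum hpw
      have e1 : ∑ k ∈ range t, (v + ((t:ℤ) - k))
          = t*v + t*t - (∑ k ∈ range t, (k:ℤ)) := by
        rw [Finset.sum_add_distrib, Finset.sum_const, Finset.sum_sub_distrib,
          Finset.sum_const, card_range]
        push_cast
        ring
      have g1 := gauss1 t
      linarith
    have hIco : ∑ k ∈ range t, B k + ∑ k ∈ Ico t n, B k = c := by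
      rw [Finset.sum_Ico_eq_sub _ htn', hsum]
      ring
    have h2 : 2*((n:ℤ) - t)*v - ((n:ℤ)-t)*((n:ℤ)-t-1)
        ≤ 2 * (c - ∑ k ∈ range t, B k) := by
      have hpw : ∀ k ∈ Ico t n, v - ((k:ℤ) - t) ≤ B k := by
        intro k hk
        rw [mem_Ico] at hk
        have hg := hBgap t (k - t)
        have e : t + (k - t) = k := by omega
        rw [e] at hg
        have e2 : ((k - t : ℕ):ℤ) = (k:ℤ) - t := by omega
        rw [e2] at hg
        linarith
      have hs := Finset.sum_le_sum hpw
      have e1 : ∑ k ∈ Ico t n, (v - ((k:ℤ) - t))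
          = ((n:ℤ)-t)*(v + t) - (∑ k ∈ Ico t n, (k:ℤ)) := by
        have : ∀ k ∈ Ico t n, (v - ((k:ℤ) - t)) = (v + t) - (k:ℤ) := by
          intro k _; ring
        rw [Finset.sum_congr rfl this, Finset.sum_sub_distrib, Finset.sum_const,
          Nat.card_Ico, nsmul_eq_mul]
        rw [show ((n - t : ℕ):ℤ) = (n:ℤ) - t from by omega]
      have e2 : 2 * (∑ k ∈ Ico t n, (k:ℤ)) = (n:ℤ)*((n:ℤ)-1) - t*(t-1) := by
        rw [Finset.sum_Ico_eq_sub _ htn']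
        have g1 := gauss1 n
        have g2 := gauss1 t
        rw [mul_sub]
        linarith
      have hsum2 : ∑ k ∈ Ico t n, B k = c - ∑ k ∈ range t, B k := by linarith [hIco]
      rw [hsum2] at hs
      nlinarith [hs, e1, e2]
    rcases le_or_gt v ((m:ℤ) - t) with hcase | hcase
    · have hp : 2*(t:ℤ)*v ≤ 2*(t:ℤ)*((m:ℤ)-t) :=
        mul_le_mul_of_nonneg_left hcase (by positivity)
      have hmx : (0:ℤ) ≤ max 0 ((t:ℤ) - n + c) := le_max_left _ _
      rw [hApart t]
      linarith
    · have hntz : (t:ℤ) ≤ (n:ℤ) := by exact_mod_cast htn'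
      have hp : 2*((n:ℤ)-t)*((m:ℤ)-t+1) ≤ 2*((n:ℤ)-t)*v :=
        mul_le_mul_of_nonneg_left (by linarith) (by linarith)
      have hmx : (t:ℤ) - n + c ≤ max 0 ((t:ℤ) - n + c) := le_max_right _ _
      rw [hApart t]
      rw [hnZ] at h2 hp hmx ⊢
      nlinarith [h1, h2, hp, hmx]
  -- A is antitone
  have hAanti : ∀ k : ℕ, A (k+1) ≤ A k := by
    intro k
    simp only [hAdef]
    push_cast
    split_ifs <;> linarith
  -- total sum of A is c
  have hSA : ∑ k ∈ range n, A k = c := by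
    have h := hApart n
    rw [max_eq_right (by linarith)] at h
    rw [hnZ] at h
    nlinarith [h]
  -- Abel summation: ∑ B^2 ≤ ∑ A^2
  have habel : ∑ k ∈ range n, (B k)^2 ≤ ∑ k ∈ range n, (A k)^2 := by
    have key := Finset.sum_range_by_parts (fun k => B k + A k) (fun k => B k - A k) n
    simp only [smul_eq_mul] at key
    have e0 : ∑ j ∈ range n, (B j - A j) = 0 := by
      rw [Finset.sum_sub_distrib, hsum, hSA]
      ring
    rw [e0, mul_zero] at key
    have hterm : ∀ i ∈ range (n-1),
        0 ≤ ((fun k => B k + A k) (i+1) - (fun k => B k + A k) i) *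
            (∑ j ∈ range (i+1), ((fun k => B k - A k) j)) := by
      intro i hi
      rw [mem_range] at hi
      have ha := hAanti i
      have hbb := hBanti i (i+1) (by omega)
      have hmaj := hS (i+1) (by omega) (by omega)
      have hd : (∑ j ∈ range (i+1), (B j - A j)) ≤ 0 := by
        rw [Finset.sum_sub_distrib]
        linarith
      simp only
      nlinarith [hd, ha, hbb]
    have hnn := Finset.sum_nonneg hterm
    have e3 : ∑ k ∈ range n, ((B k)^2 - (A k)^2)
        = ∑ k ∈ range n, (fun k => B k + A k) k * ((fun k => B k - A k) k) := by
      refine Finset.sum_congr rfl fun k _ => ?_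
      simp only
      ring
    have e4 : ∑ k ∈ range n, ((B k)^2 - (A k)^2) ≤ 0 := by
      rw [e3, key]
      linarith
    rw [Finset.sum_sub_distrib] at e4
    linarith
  -- value of ∑ A^2
  have hpt : ∀ k : ℕ, (A k)^2 = ((m:ℤ) - k)^2
      + (if (n:ℤ) - c ≤ (k:ℤ) then 2*(m:ℤ)+1-2*(k:ℤ) else 0) := by
    intro k
    by_cases h : (n:ℤ) - c ≤ (k:ℤ)
    · simp only [hAdef, if_pos h]
      ring
    · simp only [hAdef, if_neg h]
      ring
  have hT : ∀ t : ℕ, ∑ k ∈ range t, (if (n:ℤ) - c ≤ (k:ℤ) then 2*(m:ℤ)+1-2*(k:ℤ) else 0)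
      = (max 0 ((t:ℤ)-n+c)) * (2*c - n)
        - (max 0 ((t:ℤ)-n+c)) * ((max 0 ((t:ℤ)-n+c)) - 1) := by
    intro t
    induction t with
    | zero =>
        simp only [sum_range_zero, Nat.cast_zero]
        rw [max_eq_left (by rw [hnZ]; linarith)]
        ring
    | succ t ih =>
        rw [sum_range_succ]
        by_cases h : (n:ℤ) - c ≤ (t:ℤ)
        · rw [if_pos h]
          have e1 : max 0 ((t:ℤ) - n + c) = (t:ℤ) - n + c := max_eq_right (by linarith)
          have e2 : max 0 ((((t+1):ℕ):ℤ) - n + c) = (((t+1):ℕ):ℤ) - n + c :=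
            max_eq_right (by push_cast; linarith)
          rw [e1] at ih
          rw [e2, ih, hnZ]
          push_cast
          ring
        · rw [if_neg h]
          have e1 : max 0 ((t:ℤ) - n + c) = 0 := max_eq_left (by linarith)
          have e2 : max 0 ((((t+1):ℕ):ℤ) - n + c) = 0 :=
            max_eq_left (by push_cast; linarith)
          rw [e1] at ih
          rw [e2, ih]
          ring
  have hAsq : ∑ k ∈ range n, (A k)^2
      = (∑ k ∈ range n, ((m:ℤ) - k)^2) + (c^2 - 2*m*c) := by
    have e1 : ∑ k ∈ range n, (A k)^2
        = (∑ k ∈ range n, ((m:ℤ) - k)^2)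
          + ∑ k ∈ range n, (if (n:ℤ) - c ≤ (k:ℤ) then 2*(m:ℤ)+1-2*(k:ℤ) else 0) := by
      rw [← Finset.sum_add_distrib]
      exact Finset.sum_congr rfl fun k _ => hpt k
    have hmx : max 0 ((n:ℤ) - (n:ℤ) + c) = (n:ℤ) - (n:ℤ) + c :=
      max_eq_right (by linarith)
    rw [e1, hT n, hmx, hnZ]
    ring
  -- value of ∑ (m-k)^2 and the binomial coefficient
  have hQ : 6 * (∑ k ∈ range n, ((m:ℤ) - k)^2) = 2*(m:ℤ)*((m:ℤ)+1)*(2*(m:ℤ)+1) := by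
    have e1 : ∑ k ∈ range n, ((m:ℤ) - k)^2
        = n*(m:ℤ)^2 - 2*m*(∑ k ∈ range n, (k:ℤ)) + ∑ k ∈ range n, (k:ℤ)^2 := by
      have : ∀ k ∈ range n, ((m:ℤ) - k)^2 = (m:ℤ)^2 - 2*m*(k:ℤ) + (k:ℤ)^2 := by
        intro k _; ring
      rw [Finset.sum_congr rfl this, Finset.sum_add_distrib, Finset.sum_sub_distrib,
        Finset.sum_const, card_range, nsmul_eq_mul, Finset.mul_sum]
    have g1 := gauss1 n
    have g2 := gauss2 n
    rw [hnZ] at g1 g2 e1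
    linear_combination 6*e1 - 6*(m:ℤ)*g1 + g2
  have hC : 6 * (((n + 1).choose 3 : ℕ) : ℤ) = (2*(m:ℤ)+2)*(2*(m:ℤ)+1)*(2*(m:ℤ)) := by
    have := choose3 (n+1)
    push_cast at this
    rw [hnZ] at this
    linear_combination this
  -- the double sum identity
  have hBsq : ∑ i : Fin n, (b i)^2 = ∑ k ∈ range n, (B k)^2 := by
    rw [← Fin.sum_univ_eq_sum_range (fun k => (B k)^2) n]
    refine Finset.sum_congr rfl fun i _ => ?_
    rw [hBeq i.1 i.2]
  have hdq : c^2 = 2 * (∑ i : Fin n, ∑ j : Fin n, if i < j then b i * b j else 0)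
      + ∑ i : Fin n, (b i)^2 := by
    have e1 : c^2 = ∑ i : Fin n, ∑ j : Fin n, b i * b j := by
      rw [hc, ← Finset.sum_mul_sum]
      ring
    have e2 : ∀ i j : Fin n, b i * b j
        = (if i < j then b i * b j else 0) + (if j < i then b i * b j else 0)
          + (if i = j then b i * b j else 0) := by
      intro i j
      rcases lt_trichotomy i j with h | h | h
      · rw [if_pos h, if_neg (asymm h), if_neg (ne_of_lt h)]
        ring
      · rw [if_neg (by simp [h]), if_neg (by simp [h]), if_pos h]
        ring
      · rw [if_neg (asymm h), if_pos h, if_neg (Ne.symm (ne_of_lt h))]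
        ring
    have e3 : ∑ i : Fin n, ∑ j : Fin n, b i * b j
        = (∑ i : Fin n, ∑ j : Fin n, if i < j then b i * b j else 0)
          + (∑ i : Fin n, ∑ j : Fin n, if j < i then b i * b j else 0)
          + (∑ i : Fin n, ∑ j : Fin n, if i = j then b i * b j else 0) := by
      rw [← Finset.sum_add_distrib, ← Finset.sum_add_distrib]
      refine Finset.sum_congr rfl fun i _ => ?_
      rw [← Finset.sum_add_distrib, ← Finset.sum_add_distrib]
      exact Finset.sum_congr rfl fun j _ => e2 i j
    have e4 : (∑ i : Fin n, ∑ j : Fin n, if j < i then b i * b j else 0)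
        = ∑ i : Fin n, ∑ j : Fin n, if i < j then b i * b j else 0 := by
      rw [Finset.sum_comm]
      refine Finset.sum_congr rfl fun i _ => Finset.sum_congr rfl fun j _ => ?_
      rcases lt_or_ge i j with h | h
      · rw [if_pos h, if_pos h, mul_comm]
      · rw [if_neg (not_lt.mpr h), if_neg (not_lt.mpr h)]
    have e5 : (∑ i : Fin n, ∑ j : Fin n, if i = j then b i * b j else 0)
        = ∑ i : Fin n, (b i)^2 := by
      refine Finset.sum_congr rfl fun i _ => ?_
      rw [Finset.sum_ite_eq]
      simp [pow_two]
    rw [e1, e3, e4, e5]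
    ring
  -- conclusion
  have hfin : 2 * ((n:ℤ) - 1) * c = 4 * (m:ℤ) * c := by
    rw [hnZ]; ring
  rw [ge_iff_le, hfin]
  have hch := hC
  have hq := hQ
  linarith [hdq, hBsq, habel, hAsq, hch, hq]
end

section
/- Let n ≥ 1 and let b_1 ≥ ... ≥ b_n be integers with b_i - b_{i+1} ≤ 1 for all i (no gap) and Σ b_i = c with 0 ≤ c ≤ n/2. If n is even then Σ_{i=1}^n b_i² ≤ c² + 2·Σ_{i=1}^{(n-2)/2} i², and if n is odd then Σ_{i=1}^n b_i² ≤ (c - (n-1)/2)² + Σ_{i=-(n-3)/2}^{(n-1)/2} i². -/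
/-!
Shifting by the index turns the no-gap condition into monotonicity: `d i = b i + i` is
nondecreasing. The extremal sequence `e` (the run `M, M - 1, …` with one value repeated) has
`e i + i ∈ {M, M + 1}`, and a nondecreasing integer sequence is majorized by any such balanced
sequence with the same sum, so the prefix sums of `b` are bounded by those of `e`. As `b + e` is
antitone, Abel summation (Karamata for `x ↦ x ^ 2`) gives `∑ b i ^ 2 ≤ ∑ e i ^ 2`. The right-hand
sides are `∑ e i ^ 2` for top value `M = (n - 2) / 2` and repeated value `c` (`n` even), resp.
`M = (n - 1) / 2` and repeated value `c - M` (`n` odd).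
-/

open Finset

section OrderedRing

variable {R : Type*} [CommRing R] [LinearOrder R] [IsStrictOrderedRing R]

theorem sum_mul_nonneg_of_prefix_sum_nonneg {x s : ℕ → R} {n : ℕ}
    (hx : ∀ k ≤ n, 0 ≤ ∑ i ∈ range k, x i) (hx₀ : ∑ i ∈ range n, x i = 0) (hs : Antitone s) :
    0 ≤ ∑ i ∈ range n, x i * s i := by
  have hby_parts := sum_range_by_parts s x n
  simp only [smul_eq_mul, hx₀, mul_zero, zero_sub] at hby_parts
  rw [sum_congr rfl fun i _ => mul_comm (x i) (s i), hby_parts, ← sum_neg_distrib]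
  refine sum_nonneg fun i hi => ?_
  rw [← neg_mul, neg_sub]
  refine mul_nonneg (sub_nonneg.2 (hs i.le_succ)) (hx _ ?_)
  rw [mem_range] at hi
  omega

/-- Karamata's inequality for `x ↦ x ^ 2`. -/
theorem sum_sq_le_sum_sq_of_prefix_sum_le {a b : ℕ → R} {n : ℕ}
    (hprefix : ∀ k ≤ n, ∑ i ∈ range k, a i ≤ ∑ i ∈ range k, b i)
    (htotal : ∑ i ∈ range n, a i = ∑ i ∈ range n, b i) (hanti : Antitone (b + a)) :
    ∑ i ∈ range n, a i ^ 2 ≤ ∑ i ∈ range n, b i ^ 2 := by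
  have habel := sum_mul_nonneg_of_prefix_sum_nonneg (x := b - a) (n := n)
    (fun k hk => by simpa [sum_sub_distrib] using hprefix k hk)
    (by simp [sum_sub_distrib, htotal]) hanti
  have hdiff : ∑ i ∈ range n, (b - a) i * (b + a) i =
      ∑ i ∈ range n, b i ^ 2 - ∑ i ∈ range n, a i ^ 2 := by
    rw [← sum_sub_distrib]
    exact sum_congr rfl fun i _ => by simp only [Pi.sub_apply, Pi.add_apply]; ring
  linarith

end OrderedRing

theorem Monotone.sum_range_le_of_balanced {d e : ℕ → ℤ} (hd : Monotone d) {M : ℤ}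
    (he : ∀ i, e i ∈ Set.Icc M (M + 1)) {n : ℕ}
    (htotal : ∑ i ∈ range n, d i = ∑ i ∈ range n, e i) {k : ℕ} (hk : k ≤ n) :
    ∑ i ∈ range k, d i ≤ ∑ i ∈ range k, e i := by
  rcases le_or_gt (d k) M with hdk | hdk
  · refine sum_le_sum fun i hi => ?_
    exact (hd (mem_range.1 hi).le).trans (hdk.trans (he i).1)
  · have htail : ∑ i ∈ Ico k n, e i ≤ ∑ i ∈ Ico k n, d i :=
      sum_le_sum fun i hi => (he i).2.trans (hdk.trans_le (hd (mem_Ico.1 hi).1))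
    linarith [sum_range_add_sum_Ico d hk, sum_range_add_sum_Ico e hk]

/-- The sequence `M, M - 1, M - 2, …` in which the value `e` is written twice. -/
def runWithRepeat (M e : ℤ) (i : ℕ) : ℤ :=
  if e ≤ M - i then M - i else M - i + 1

namespace runWithRepeat

variable {M e : ℤ}

theorem antitone : Antitone (runWithRepeat M e) :=
  antitone_nat_of_succ_le fun i => by unfold runWithRepeat; push_cast; split_ifs <;> omega

theorem add_mem_Icc (i : ℕ) : runWithRepeat M e i + i ∈ Set.Icc M (M + 1) := by
  unfold runWithRepeat; split_ifs <;> constructor <;> omega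

theorem sum_range_succ {α : Type*} [AddCommMonoid α] (f : ℤ → α) {n : ℕ} (he : M - n ≤ e)
    (he' : e ≤ M + 1) :
    ∑ i ∈ range (n + 1), f (runWithRepeat M e i) = f e + ∑ i ∈ range n, f (M - i) := by
  induction n with
  | zero =>
    rw [zero_add, Finset.sum_range_one, Finset.sum_range_zero, add_zero, runWithRepeat]
    congr 1
    split_ifs <;> omega
  | succ n ih =>
    rw [Finset.sum_range_succ]
    rcases eq_or_lt_of_le he with he | he
    · have hrun (i) (hi : i ∈ range (n + 1)) : runWithRepeat M e i = M - i :=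
        if_pos (by rw [mem_range] at hi; omega)
      rw [sum_congr rfl fun i hi => congrArg f (hrun i hi), add_comm, runWithRepeat,
        if_pos (by omega), ← he]
    · rw [ih (by omega), Finset.sum_range_succ, add_assoc]
      congr 3
      unfold runWithRepeat
      rw [if_neg (by omega)]
      push_cast
      ring

end runWithRepeat

theorem sum_range_sub_eq_sum_Ioc {α : Type*} [AddCommMonoid α] (f : ℤ → α) (M : ℤ) (n : ℕ) :
    ∑ i ∈ range n, f (M - i) = ∑ j ∈ Ioc (M - n) M, f j := by
  rw [Int.Ioc_eq_finset_map, sum_map, ← sum_range_reflect]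
  simp only [Function.Embedding.trans_apply, Nat.castEmbedding_apply, addLeftEmbedding_apply,
    sub_sub_cancel, Int.toNat_natCast]
  refine sum_congr rfl fun j hj => ?_
  rw [mem_range] at hj
  congr 1
  omega

theorem sum_range_two_mul_add_one_sub {α : Type*} [AddCommMonoid α] (f : ℤ → α) (m : ℕ) :
    ∑ i ∈ range (2 * m + 1), f (m - i) = f 0 + ∑ j ∈ Icc (1 : ℤ) m, (f j + f (-j)) := by
  have hIcc (g : ℤ → α) : ∑ j ∈ Icc (1 : ℤ) m, g j = ∑ i ∈ range m, g (i + 1) := by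
    rw [Int.Icc_eq_finset_map, sum_map]
    simp [add_comm]
  have hpos : ∑ i ∈ range m, f (m - i) = ∑ i ∈ range m, f (i + 1) := by
    rw [← sum_range_reflect]
    exact sum_congr rfl fun i hi => congrArg f (by rw [mem_range] at hi; omega)
  rw [two_mul, add_assoc, sum_range_add, sum_range_succ', sum_add_distrib, hIcc, hIcc, hpos]
  push_cast
  simp only [sub_add_cancel_left, add_zero, sub_self]
  abel

theorem sum_range_sq_le_sum_sq_runWithRepeat {a : ℕ → ℤ} (ha : Antitone a)
    (hgap : Monotone fun i => a i + i) {M e : ℤ} {n : ℕ}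
    (htotal : ∑ i ∈ range n, a i = ∑ i ∈ range n, runWithRepeat M e i) :
    ∑ i ∈ range n, a i ^ 2 ≤ ∑ i ∈ range n, runWithRepeat M e i ^ 2 := by
  refine sum_sq_le_sum_sq_of_prefix_sum_le (fun k hk => ?_) htotal
    (runWithRepeat.antitone.add ha)
  simpa [sum_add_distrib] using
    hgap.sum_range_le_of_balanced runWithRepeat.add_mem_Icc (by simp [sum_add_distrib, htotal]) hk

theorem sum_sq_le_sum_sq_runWithRepeat {n : ℕ} (hn : 0 < n) {b : Fin n → ℤ} (hb : Antitone b)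
    (hgap : ∀ i j : Fin n, (j : ℕ) = i + 1 → b i - b j ≤ 1) {M e : ℤ}
    (htotal : ∑ i, b i = ∑ i ∈ range n, runWithRepeat M e i) :
    ∑ i, b i ^ 2 ≤ ∑ i ∈ range n, runWithRepeat M e i ^ 2 := by
  let a (i : ℕ) : ℤ := b ⟨min i (n - 1), by omega⟩
  have hab (f : ℤ → ℤ) : ∑ i, f (b i) = ∑ i ∈ range n, f (a i) := by
    rw [← Fin.sum_univ_eq_sum_range]
    exact sum_congr rfl fun i _ => congrArg (f ∘ b) (Fin.ext (by simp; omega))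
  have ha : Antitone a := fun i j hij => hb (Fin.mk_le_mk.2 (by omega))
  have hgap' : Monotone fun i => a i + i := monotone_nat_of_le_succ fun i => by
    by_cases hi : i + 1 < n
    · have := hgap ⟨min i (n - 1), by omega⟩ ⟨min (i + 1) (n - 1), by omega⟩ (by simp; omega)
      push_cast
      linarith
    · have : a i = a (i + 1) := congrArg b (Fin.ext (by simp; omega))
      push_cast
      linarith
  rw [hab (· ^ 2)]
  exact sum_range_sq_le_sum_sq_runWithRepeat ha hgap' (by simpa using (hab id).symm.trans htotal)

theorem stmt_15 (n : ℕ) (hn : 0 < n) (b : Fin n → ℤ) (hb : Antitone b)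
    (hgap : ∀ i : Fin n, ∀ j : Fin n, (j : ℕ) = (i : ℕ) + 1 → b i - b j ≤ 1)
    (c : ℤ) (hc : c = ∑ i : Fin n, b i) (hc0 : 0 ≤ c) (hcn : 2 * c ≤ (n : ℤ)) :
    (Even n →
      ∑ i : Fin n, (b i) ^ 2 ≤
        c ^ 2 + 2 * ∑ i ∈ Finset.Icc (1 : ℤ) (((n : ℤ) - 2) / 2), i ^ 2) ∧
    (Odd n →
      ∑ i : Fin n, (b i) ^ 2 ≤
        (c - ((n : ℤ) - 1) / 2) ^ 2 +
          ∑ i ∈ Finset.Icc (-(((n : ℤ) - 3) / 2)) (((n : ℤ) - 1) / 2), i ^ 2) := by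
  refine ⟨fun ⟨k, hk⟩ => ?_, fun ⟨t, ht⟩ => ?_⟩
  · obtain ⟨m, rfl⟩ : ∃ m, k = m + 1 := ⟨k - 1, by omega⟩
    have hrun (f : ℤ → ℤ) : ∑ i ∈ range n, f (runWithRepeat m c i) =
        f c + (f 0 + ∑ j ∈ Icc (1 : ℤ) m, (f j + f (-j))) := by
      rw [show n = 2 * m + 1 + 1 by omega, runWithRepeat.sum_range_succ f (by push_cast; omega)
        (by omega), sum_range_two_mul_add_one_sub]
    have htotal : ∑ i, b i = ∑ i ∈ range n, runWithRepeat m c i := by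
      rw [← hc]; simpa using (hrun id).symm
    refine (sum_sq_le_sum_sq_runWithRepeat hn hb hgap htotal).trans_eq ?_
    rw [hrun (· ^ 2), show ((n : ℤ) - 2) / 2 = m by omega]
    simp only [neg_sq, ← two_mul, ← mul_sum]
    ring
  · have hrun (f : ℤ → ℤ) : ∑ i ∈ range n, f (runWithRepeat t (c - t) i) =
        f (c - t) + ∑ i ∈ range (2 * t), f (t - i) := by
      rw [ht, runWithRepeat.sum_range_succ f (by push_cast; omega) (by omega)]
    have hrun_id : ∑ i ∈ range (2 * t), ((t : ℤ) - i) = t := by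
      have hsymm := sum_range_two_mul_add_one_sub id t
      simp only [id, add_neg_cancel, sum_const_zero, add_zero, Finset.sum_range_succ] at hsymm
      push_cast at hsymm
      linarith
    have htotal : ∑ i, b i = ∑ i ∈ range n, runWithRepeat t (c - t) i := by
      have hsum := hrun id
      simp only [id, hrun_id] at hsum
      rw [← hc, hsum, sub_add_cancel]
    refine (sum_sq_le_sum_sq_runWithRepeat hn hb hgap htotal).trans_eq ?_
    rw [hrun (· ^ 2), sum_range_sub_eq_sum_Ioc (· ^ 2), show ((n : ℤ) - 1) / 2 = t by omega,
      show -(((n : ℤ) - 3) / 2) = (t : ℤ) - (2 * t : ℕ) + 1 by omega, Icc_add_one_left_eq_Ioc]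
end
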